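/- arXiv:1407.1420 — 8 statements merged into one kernel-verified Lean document; each statement's English description precedes it below -/
import Mathlib

section
/- Let w ∈ V_ℂ be nonzero, W = ℂ·w the line it spans. Then the supercommutant of C(W) in C(V_ℂ) equals C(w^⊥): every a ∈ C(V_ℂ) satisfying w·a = γ(a)·w lies in the subalgebra generated by the orthogonal hyperplane w^⊥. -/
open CliffordAlgebra
open scoped ComplexOrder

/-- for a nonzero `w ∈ V_ℂ` (modelled as a complex space `E` with symmetric
bilinear form `B` admitting a conjugation `conj` with `(z̄|z) > 0` for `z ≠ 0`), the
supercommutant of `C(ℂ·w)`, i.e. `{a | w·a = γ(a)·w}`, equals the subalgebra `C(w^⊥)`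
generated by the orthogonal hyperplane of `w`. -/
theorem supercommutant_line_eq_clifford_hyperplane
    {E : Type*} [AddCommGroup E] [Module ℂ E]
    (B : LinearMap.BilinForm ℂ E) (hB : B.IsSymm)
    (conj : E → E) (hpos : ∀ z : E, z ≠ 0 → 0 < B (conj z) z)
    (w : E) (hw : w ≠ 0) :
    {a : CliffordAlgebra (LinearMap.BilinMap.toQuadraticMap B) |
        ι (LinearMap.BilinMap.toQuadraticMap B) w * a
          = involute a * ι (LinearMap.BilinMap.toQuadraticMap B) w}
      = (Algebra.adjoin ℂ (ι (LinearMap.BilinMap.toQuadraticMap B) ''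
          (((ℂ ∙ w).orthogonalBilin B) : Set E)) :
            Set (CliffordAlgebra (LinearMap.BilinMap.toQuadraticMap B))) := by
  have hBsymm : ∀ x y : E, B x y = B y x := fun x y => by
    have h := hB.eq x y; exact h
  set Q : QuadraticForm ℂ E := LinearMap.BilinMap.toQuadraticMap B with hQdef
  set K : Set E := (((ℂ ∙ w).orthogonalBilin B) : Set E) with hKdef
  set A : Subalgebra ℂ (CliffordAlgebra Q) := Algebra.adjoin ℂ (ι Q '' K) with hAdef
  -- membership in the hyperplane
  have hmemK : ∀ v : E, v ∈ K ↔ B w v = 0 := by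
    intro v
    constructor
    · intro hv
      exact (Submodule.mem_orthogonalBilin_iff.mp hv) w (Submodule.mem_span_singleton_self w)
    · intro hv
      refine Submodule.mem_orthogonalBilin_iff.mpr ?_
      intro n hn
      obtain ⟨c, rfl⟩ := Submodule.mem_span_singleton.mp hn
      show B (c • w) v = 0
      rw [map_smul]
      simp [hv]
  -- the polar identity
  have hpolar : ∀ x y : E, ι Q x * ι Q y + ι Q y * ι Q x
      = algebraMap ℂ (CliffordAlgebra Q) (B x y + B y x) := by
    intro x y
    rw [ι_mul_ι_add_swap, hQdef, LinearMap.BilinMap.polar_toQuadraticMap]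
  -- every element of A supercommutes with ι w
  have hAcomm : ∀ x ∈ A, ι Q w * x = involute x * ι Q w := by
    intro x hx
    induction hx using Algebra.adjoin_induction with
    | mem x hx =>
      obtain ⟨v, hv, rfl⟩ := hx
      have h0 : B w v + B v w = 0 := by
        have h1 : B w v = 0 := (hmemK v).mp hv
        rw [h1, hBsymm v w, h1, add_zero]
      have hwv := hpolar w v
      rw [h0, map_zero] at hwv
      rw [involute_ι, neg_mul]
      exact eq_neg_of_add_eq_zero_left hwv
    | algebraMap r =>
      rw [AlgHom.commutes]
      exact (Algebra.commutes r _).symm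
    | add x y _ _ hx hy => rw [map_add, mul_add, add_mul, hx, hy]
    | mul x y _ _ hx hy => rw [map_mul, ← mul_assoc, hx, mul_assoc, hy, ← mul_assoc]
  ext a
  simp only [Set.mem_setOf_eq, SetLike.mem_coe]
  constructor
  · intro ha
    -- choose a complement vector u with B w u = 1
    have hcw : B w (conj w) ≠ 0 := by
      have h2 := hpos w hw
      rw [hBsymm (conj w) w] at h2
      exact ne_of_gt h2
    set u : E := (B w (conj w))⁻¹ • conj w with hudef
    have hwu : B w u = 1 := by
      rw [hudef, map_smul, smul_eq_mul, inv_mul_cancel₀ hcw]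
    have huw : B u w = 1 := by rw [hBsymm u w, hwu]
    -- swapping ι u past elements of A
    have hswap : ∀ x ∈ A, ∃ b ∈ A, ∃ c ∈ A, ι Q u * x = b + c * ι Q u := by
      intro x hx
      induction hx using Algebra.adjoin_induction with
      | mem x hx =>
        obtain ⟨v, hv, rfl⟩ := hx
        refine ⟨algebraMap ℂ _ (B u v + B v u), Subalgebra.algebraMap_mem _ _,
          -ι Q v, neg_mem (Algebra.subset_adjoin ⟨v, hv, rfl⟩), ?_⟩
        rw [neg_mul, ← sub_eq_add_neg]
        exact eq_sub_of_add_eq (hpolar u v)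
      | algebraMap r =>
        exact ⟨0, zero_mem _, algebraMap ℂ _ r, Subalgebra.algebraMap_mem _ _,
          by rw [zero_add, ← Algebra.commutes]⟩
      | add x y hxA hyA hx hy =>
        obtain ⟨b, hb, c, hc, hbc⟩ := hx
        obtain ⟨b', hb', c', hc', hbc'⟩ := hy
        exact ⟨b + b', add_mem hb hb', c + c', add_mem hc hc',
          by rw [mul_add, hbc, hbc']; noncomm_ring⟩
      | mul x y hxA hyA hx hy =>
        obtain ⟨b, hb, c, hc, hbc⟩ := hx
        obtain ⟨b', hb', c', hc', hbc'⟩ := hy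
        refine ⟨b * y + c * b', add_mem (mul_mem hb hyA) (mul_mem hc hb'),
          c * c', mul_mem hc hc', ?_⟩
        calc ι Q u * (x * y) = (ι Q u * x) * y := by rw [mul_assoc]
          _ = (b + c * ι Q u) * y := by rw [hbc]
          _ = b * y + c * (ι Q u * y) := by noncomm_ring
          _ = b * y + c * (b' + c' * ι Q u) := by rw [hbc']
          _ = (b * y + c * b') + (c * c') * ι Q u := by noncomm_ring
    -- decomposition of an arbitrary element
    have hdec : ∀ x : CliffordAlgebra Q, ∃ b ∈ A, ∃ c ∈ A, x = b + c * ι Q u := by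
      intro x
      induction x using CliffordAlgebra.induction with
      | algebraMap r =>
        exact ⟨algebraMap ℂ _ r, Subalgebra.algebraMap_mem _ _, 0, zero_mem _, by
          rw [zero_mul, add_zero]⟩
      | ι z =>
        have hv : B w (z - (B w z) • u) = 0 := by
          rw [map_sub, map_smul, smul_eq_mul, hwu, mul_one, sub_self]
        refine ⟨ι Q (z - (B w z) • u),
          Algebra.subset_adjoin ⟨_, (hmemK _).mpr hv, rfl⟩,
          algebraMap ℂ _ (B w z), Subalgebra.algebraMap_mem _ _, ?_⟩
        rw [map_sub, map_smul, Algebra.smul_def, sub_add_cancel]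
      | add x y hx hy =>
        obtain ⟨b, hb, c, hc, hbc⟩ := hx
        obtain ⟨b', hb', c', hc', hbc'⟩ := hy
        exact ⟨b + b', add_mem hb hb', c + c', add_mem hc hc',
          by rw [hbc, hbc']; noncomm_ring⟩
      | mul x y hx hy =>
        obtain ⟨b₁, hb₁, c₁, hc₁, hbc₁⟩ := hx
        obtain ⟨b₂, hb₂, c₂, hc₂, hbc₂⟩ := hy
        obtain ⟨p, hp, q, hq, hpq⟩ := hswap b₂ hb₂
        obtain ⟨p', hp', q', hq', hpq'⟩ := hswap c₂ hc₂
        refine ⟨b₁ * b₂ + c₁ * p + (c₁ * q') * algebraMap ℂ _ (Q u),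
          add_mem (add_mem (mul_mem hb₁ hb₂) (mul_mem hc₁ hp))
            (mul_mem (mul_mem hc₁ hq') (Subalgebra.algebraMap_mem _ _)),
          b₁ * c₂ + c₁ * q + c₁ * p',
          add_mem (add_mem (mul_mem hb₁ hc₂) (mul_mem hc₁ hq)) (mul_mem hc₁ hp'), ?_⟩
        have h3 : (p' + q' * ι Q u) * ι Q u
            = q' * algebraMap ℂ (CliffordAlgebra Q) (Q u) + p' * ι Q u := by
          rw [add_mul, mul_assoc, ι_sq_scalar, add_comm]
        calc x * y = (b₁ + c₁ * ι Q u) * (b₂ + c₂ * ι Q u) := by rw [hbc₁, hbc₂]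
          _ = b₁ * b₂ + b₁ * c₂ * ι Q u + c₁ * (ι Q u * b₂)
              + c₁ * ((ι Q u * c₂) * ι Q u) := by noncomm_ring
          _ = b₁ * b₂ + b₁ * c₂ * ι Q u + c₁ * (p + q * ι Q u)
              + c₁ * ((p' + q' * ι Q u) * ι Q u) := by rw [hpq, hpq']
          _ = b₁ * b₂ + b₁ * c₂ * ι Q u + c₁ * (p + q * ι Q u)
              + c₁ * (q' * algebraMap ℂ (CliffordAlgebra Q) (Q u) + p' * ι Q u) := by
            rw [h3]
          _ = (b₁ * b₂ + c₁ * p + (c₁ * q') * algebraMap ℂ (CliffordAlgebra Q) (Q u))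
              + (b₁ * c₂ + c₁ * q + c₁ * p') * ι Q u := by noncomm_ring
    obtain ⟨b, hb, c, hc, rfl⟩ := hdec a
    have h1 : ι Q w * b = involute b * ι Q w := hAcomm b hb
    have h2 : ι Q w * c = involute c * ι Q w := hAcomm c hc
    have key : involute c * (ι Q w * ι Q u + ι Q u * ι Q w) = 0 := by
      have e : involute b * ι Q w + involute c * (ι Q w * ι Q u)
          = involute b * ι Q w + involute c * (-(ι Q u * ι Q w)) := by
        calc involute b * ι Q w + involute c * (ι Q w * ι Q u)
            = ι Q w * b + (ι Q w * c) * ι Q u := by rw [h1, h2]; noncomm_ring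
          _ = ι Q w * (b + c * ι Q u) := by noncomm_ring
          _ = involute (b + c * ι Q u) * ι Q w := ha
          _ = involute b * ι Q w + involute c * (-(ι Q u * ι Q w)) := by
              rw [map_add, map_mul, involute_ι]; noncomm_ring
      have e2 := add_left_cancel e
      rw [mul_add, e2, mul_neg, neg_add_cancel]
    rw [hpolar w u, hwu, huw] at key
    have h2' : (2 : ℂ) • involute c = 0 := by
      rw [Algebra.smul_def, Algebra.commutes]
      rw [show ((1 : ℂ) + 1) = 2 by norm_num] at key
      exact key
    have hcinv : involute c = 0 := by
      rcases smul_eq_zero.mp h2' with h | h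
      · norm_num at h
      · exact h
    have hc0 : c = 0 := by
      rw [← involute_involute c, hcinv, map_zero]
    rw [hc0, zero_mul, add_zero]
    exact hb
  · intro ha
    exact hAcomm a ha
end

section
/- If X and Y are subspaces of a vector space V with a quadratic form, then the intersection of the Clifford subalgebras generated by X and by Y equals the Clifford subalgebra generated by X ∩ Y: C(X) ∩ C(Y) = C(X ∩ Y) as subalgebras of C(V). -/
open CliffordAlgebra

namespace CliffordInfAux

variable {k V : Type*} [Field k] [AddCommGroup V] [Module k V]

/-- The Clifford subalgebra generated by a subspace. -/
def cA (Q : QuadraticForm k V) (Z : Submodule k V) : Subalgebra k (CliffordAlgebra Q) :=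
  Algebra.adjoin k (ι Q '' (Z : Set V))

lemma mem_cA {Q : QuadraticForm k V} {Z : Submodule k V} {z : V} (hz : z ∈ Z) :
    ι Q z ∈ cA Q Z :=
  Algebra.subset_adjoin ⟨z, hz, rfl⟩

lemma cA_mono (Q : QuadraticForm k V) {Z Z' : Submodule k V} (h : Z ≤ Z') :
    cA Q Z ≤ cA Q Z' :=
  Algebra.adjoin_mono (Set.image_mono h)

/-- To show that everything in `Algebra.adjoin k s` lies in a submodule, it suffices that the
submodule contains `1` and is stable under left multiplication by elements of `s`. -/
lemma adjoin_le {A : Type*} [Ring A] [Algebra k A] {s : Set A} {N : Submodule k A}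
    (h1 : (1 : A) ∈ N) (hmul : ∀ a ∈ s, ∀ x ∈ N, a * x ∈ N) :
    Subalgebra.toSubmodule (Algebra.adjoin k s) ≤ N := by
  rw [Algebra.adjoin_eq_span]
  refine Submodule.span_le.2 ?_
  rintro x hx
  obtain ⟨l, hl, rfl⟩ := Submonoid.exists_list_of_mem_closure hx
  clear hx
  induction l with
  | nil => simpa using h1
  | cons a t ih =>
    rw [List.prod_cons]
    exact hmul a (hl a (List.mem_cons_self (a := a) (l := t))) _
      (ih fun y hy => hl y (List.mem_cons_of_mem a hy))

/-- `cA Q Z` is stable under contraction by arbitrary dual vectors. -/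
lemma contract_mem {Q : QuadraticForm k V} {Z : Submodule k V} (d : Module.Dual k V)
    {x : CliffordAlgebra Q} (hx : x ∈ cA Q Z) : contractLeft d x ∈ cA Q Z := by
  have key : Subalgebra.toSubmodule (cA Q Z) ≤
      Subalgebra.toSubmodule (cA Q Z) ⊓
        Submodule.comap (contractLeft d) (Subalgebra.toSubmodule (cA Q Z)) := by
    refine adjoin_le ?_ ?_
    · simp only [Submodule.mem_inf, Submodule.mem_comap, Subalgebra.mem_toSubmodule]
      exact ⟨one_mem _, by rw [contractLeft_one]; exact zero_mem _⟩
    · rintro a ⟨z, hz, rfl⟩ x hx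
      simp only [Submodule.mem_inf, Submodule.mem_comap, Subalgebra.mem_toSubmodule] at hx ⊢
      obtain ⟨hx1, hx2⟩ := hx
      refine ⟨mul_mem (mem_cA hz) hx1, ?_⟩
      rw [contractLeft_ι_mul]
      exact sub_mem (Subalgebra.smul_mem _ hx1 _) (mul_mem (mem_cA hz) hx2)
  exact (key hx).2

/-- Easy direction: contraction by a dual vector annihilating `Z` kills `cA Q Z`. -/
lemma contract_eq_zero {Q : QuadraticForm k V} {Z : Submodule k V} {d : Module.Dual k V}
    (hd : ∀ z ∈ Z, d z = 0) {x : CliffordAlgebra Q} (hx : x ∈ cA Q Z) :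
    contractLeft d x = 0 := by
  have key : Subalgebra.toSubmodule (cA Q Z) ≤ LinearMap.ker (contractLeft (Q := Q) d) := by
    refine adjoin_le ?_ ?_
    · simp [LinearMap.mem_ker]
    · rintro a ⟨z, hz, rfl⟩ x hx
      rw [LinearMap.mem_ker] at hx ⊢
      rw [contractLeft_ι_mul, hd z hz, hx, zero_smul, mul_zero, sub_zero]
  exact key hx

/-- `changeForm` maps `cA Q Z` into `cA Q' Z`. -/
lemma changeForm_mem {Q Q' : QuadraticForm k V} {B : LinearMap.BilinForm k V}
    (h : LinearMap.BilinMap.toQuadraticMap B = Q' - Q) {Z : Submodule k V}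
    {x : CliffordAlgebra Q} (hx : x ∈ cA Q Z) : changeForm h x ∈ cA Q' Z := by
  have key : Subalgebra.toSubmodule (cA Q Z) ≤
      Submodule.comap (changeForm h) (Subalgebra.toSubmodule (cA Q' Z)) := by
    refine adjoin_le ?_ ?_
    · simp only [Submodule.mem_comap, changeForm_one, Subalgebra.mem_toSubmodule]
      exact one_mem _
    · rintro a ⟨z, hz, rfl⟩ x hx
      simp only [Submodule.mem_comap, Subalgebra.mem_toSubmodule] at hx ⊢
      rw [changeForm_ι_mul]
      exact sub_mem (mul_mem (mem_cA hz) hx) (contract_mem _ hx)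
  exact key hx

section Zero

local notation "Q0" => (0 : QuadraticForm k V)

lemma ι0_anticomm (a b : V) : ι Q0 a * ι Q0 b = -(ι Q0 b * ι Q0 a) := by
  have h := ι_mul_ι_add_swap (Q := Q0) a b
  have hp : QuadraticMap.polar (⇑Q0) a b = 0 := by
    simp [QuadraticMap.polar]
  rw [hp, map_zero] at h
  exact eq_neg_of_add_eq_zero_left h

lemma ι0_sq (a : V) : ι Q0 a * ι Q0 a = 0 := by
  rw [ι_sq_scalar]; simp

/-- Decomposition of an element of `cA 0 (Z ⊔ span {w})` as `p + ι w * q`. -/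
lemma decompose (Z : Submodule k V) (w : V) {x : CliffordAlgebra Q0}
    (hx : x ∈ cA Q0 (Z ⊔ Submodule.span k {w})) :
    ∃ p ∈ cA Q0 Z, ∃ q ∈ cA Q0 Z, x = p + ι Q0 w * q := by
  set A : Submodule k (CliffordAlgebra Q0) := Subalgebra.toSubmodule (cA Q0 Z) with hA
  have hmemA : ∀ y : CliffordAlgebra Q0, y ∈ A ↔ y ∈ cA Q0 Z := fun y => Iff.rfl
  set N : Submodule k (CliffordAlgebra Q0) :=
    A ⊔ Submodule.map (LinearMap.mulLeft k (ι Q0 w)) A with hN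
  have hzN : ∀ z ∈ Z, ∀ y ∈ N, ι Q0 z * y ∈ N := by
    intro z hz y hy
    rw [hN] at hy
    obtain ⟨p, hp, q', hq', rfl⟩ := Submodule.mem_sup.1 hy
    obtain ⟨q, hq, rfl⟩ := hq'
    simp only [LinearMap.mulLeft_apply]
    rw [mul_add]
    refine add_mem (Submodule.mem_sup_left
      ((hmemA _).2 (mul_mem (mem_cA hz) ((hmemA _).1 hp)))) ?_
    have hcomm : ι Q0 z * (ι Q0 w * q) = -(ι Q0 w * (ι Q0 z * q)) := by
      rw [← mul_assoc, ι0_anticomm z w, neg_mul, mul_assoc]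
    rw [hcomm]
    exact neg_mem (Submodule.mem_sup_right
      ⟨ι Q0 z * q, (hmemA _).2 (mul_mem (mem_cA hz) ((hmemA _).1 hq)), rfl⟩)
  have hwN : ∀ y ∈ N, ι Q0 w * y ∈ N := by
    intro y hy
    rw [hN] at hy
    obtain ⟨p, hp, q', hq', rfl⟩ := Submodule.mem_sup.1 hy
    obtain ⟨q, hq, rfl⟩ := hq'
    simp only [LinearMap.mulLeft_apply]
    rw [mul_add, ← mul_assoc, ι0_sq, zero_mul, add_zero]
    exact Submodule.mem_sup_right ⟨p, hp, rfl⟩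
  have key : Subalgebra.toSubmodule (cA Q0 (Z ⊔ Submodule.span k {w})) ≤ N := by
    refine adjoin_le (Submodule.mem_sup_left ((hmemA _).2 (one_mem _))) ?_
    rintro a ⟨v, hv, rfl⟩ y hy
    obtain ⟨z, hz, w', hw', rfl⟩ := Submodule.mem_sup.1 hv
    obtain ⟨c, rfl⟩ := Submodule.mem_span_singleton.1 hw'
    rw [map_add, map_smul, add_mul, smul_mul_assoc]
    exact add_mem (hzN z hz y hy) (Submodule.smul_mem _ c (hwN y hy))
  have hxN : x ∈ N := key hx
  rw [hN] at hxN
  obtain ⟨p, hp, q', hq', rfl⟩ := Submodule.mem_sup.1 hxN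
  obtain ⟨q, hq, rfl⟩ := hq'
  exact ⟨p, (hmemA _).1 hp, q, (hmemA _).1 hq, by simp [LinearMap.mulLeft_apply]⟩

/-- Every element of the exterior algebra lies in the subalgebra generated by a
finite-dimensional subspace. -/
lemma exists_list (Q : QuadraticForm k V) (x : CliffordAlgebra Q) :
    ∃ l : List V, x ∈ cA Q (Submodule.span k {v | v ∈ l}) := by
  induction x using CliffordAlgebra.induction with
  | algebraMap r => exact ⟨[], Subalgebra.algebraMap_mem _ r⟩
  | ι v => exact ⟨[v], mem_cA (Submodule.subset_span (by simp))⟩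
  | mul x y hx hy =>
    obtain ⟨l1, h1⟩ := hx
    obtain ⟨l2, h2⟩ := hy
    refine ⟨l1 ++ l2, mul_mem ?_ ?_⟩
    · exact cA_mono Q (Submodule.span_mono fun v hv => by
        simp only [Set.mem_setOf_eq, List.mem_append] at hv ⊢; exact Or.inl hv) h1
    · exact cA_mono Q (Submodule.span_mono fun v hv => by
        simp only [Set.mem_setOf_eq, List.mem_append] at hv ⊢; exact Or.inr hv) h2
  | add x y hx hy =>
    obtain ⟨l1, h1⟩ := hx
    obtain ⟨l2, h2⟩ := hy
    refine ⟨l1 ++ l2, add_mem ?_ ?_⟩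
    · exact cA_mono Q (Submodule.span_mono fun v hv => by
        simp only [Set.mem_setOf_eq, List.mem_append] at hv ⊢; exact Or.inl hv) h1
    · exact cA_mono Q (Submodule.span_mono fun v hv => by
        simp only [Set.mem_setOf_eq, List.mem_append] at hv ⊢; exact Or.inr hv) h2

/-- The key "peeling" lemma: in the exterior algebra, an element of
`cA 0 (Z ⊔ span l)` annihilated by all contractions with functionals vanishing on `Z`
lies in `cA 0 Z`. -/
lemma peel (l : List V) (Z : Submodule k V) :
    ∀ x : CliffordAlgebra Q0, x ∈ cA Q0 (Z ⊔ Submodule.span k {v | v ∈ l}) →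
      (∀ d : Module.Dual k V, (∀ z ∈ Z, d z = 0) → contractLeft d x = 0) →
      x ∈ cA Q0 Z := by
  induction l with
  | nil =>
    intro x hx _
    have : ({v | v ∈ ([] : List V)} : Set V) = ∅ := by ext v; simp
    rw [this, Submodule.span_empty, sup_bot_eq] at hx
    exact hx
  | cons w t ih =>
    intro x hx hyp
    set Z' := Z ⊔ Submodule.span k {v | v ∈ t} with hZ'
    have hx' : x ∈ cA Q0 (Z' ⊔ Submodule.span k {w}) := by
      refine cA_mono _ ?_ hx
      have hset : ({v | v ∈ w :: t} : Set V) = insert w {v | v ∈ t} := by ext v; simp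
      rw [hset, Submodule.span_insert]
      rw [hZ', sup_assoc, sup_comm (Submodule.span k {w}) _, ← sup_assoc]
    by_cases hw : w ∈ Z'
    · refine ih x ?_ hyp
      have hle : Submodule.span k {w} ≤ Z' := by
        rwa [Submodule.span_singleton_le_iff_mem]
      rwa [sup_eq_left.2 hle] at hx'
    · obtain ⟨f, hf0, hfmap⟩ := Submodule.exists_dual_map_eq_bot_of_notMem hw inferInstance
      have hfZ' : ∀ z ∈ Z', f z = 0 := by
        intro z hz
        have hmem : f z ∈ Submodule.map f Z' := ⟨z, hz, rfl⟩
        rw [hfmap] at hmem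
        simpa using hmem
      set e : Module.Dual k V := (f w)⁻¹ • f with he
      have hew : e w = 1 := by
        simp [he, inv_mul_cancel₀ hf0]
      have heZ' : ∀ z ∈ Z', e z = 0 := by
        intro z hz; simp [he, hfZ' z hz]
      obtain ⟨p, hp, q, hq, rfl⟩ := decompose Z' w hx'
      have h0 : contractLeft e (p + ι Q0 w * q) = 0 :=
        hyp e fun z hz => heZ' z (Submodule.mem_sup_left hz)
      rw [map_add, contract_eq_zero heZ' hp, zero_add, contractLeft_ι_mul, hew,
        one_smul] at h0
      have hq' : q = ι Q0 w * contractLeft e q := by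
        have := sub_eq_zero.1 h0
        exact this
      have hx0 : p + ι Q0 w * q = p := by
        rw [hq', ← mul_assoc, ι0_sq, zero_mul, add_zero]
      rw [hx0]
      exact ih p hp (by rw [← hx0]; exact hyp)

end Zero

/-- The characterization of the Clifford subalgebra generated by a subspace, via
contractions. -/
theorem mem_cA_iff (h2 : Invertible (2 : k)) (Q : QuadraticForm k V) (Z : Submodule k V)
    (x : CliffordAlgebra Q) :
    x ∈ cA Q Z ↔ ∀ d : Module.Dual k V, (∀ z ∈ Z, d z = 0) → contractLeft d x = 0 := by
  constructor
  · exact fun hx d hd => contract_eq_zero hd hx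
  · intro hyp
    have hB : LinearMap.BilinMap.toQuadraticMap
        (QuadraticMap.associated (R := k) (M := V) (-Q)) = (0 : QuadraticForm k V) - Q :=
      changeForm.associated_neg_proof
    set y : CliffordAlgebra (0 : QuadraticForm k V) := changeForm hB x with hy
    have hyp' : ∀ d : Module.Dual k V, (∀ z ∈ Z, d z = 0) → contractLeft d y = 0 := by
      intro d hd
      rw [hy, ← changeForm_contractLeft, hyp d hd, map_zero]
    obtain ⟨l, hl⟩ := exists_list (0 : QuadraticForm k V) y
    have hy' : y ∈ cA (0 : QuadraticForm k V) (Z ⊔ Submodule.span k {v | v ∈ l}) :=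
      cA_mono _ le_sup_right hl
    have hyZ : y ∈ cA (0 : QuadraticForm k V) Z := peel l Z y hy' hyp'
    have hmem := changeForm_mem (h := changeForm.neg_proof hB) hyZ
    have hxy : changeForm (changeForm.neg_proof hB) y = x := by
      have hsymm := (changeFormEquiv hB).symm_apply_apply x
      rwa [changeFormEquiv_symm, changeFormEquiv_apply, changeFormEquiv_apply] at hsymm
    rwa [hxy] at hmem

/-- Splitting a functional annihilating `X ⊓ Y` into ones annihilating `Y` and `X`. -/
lemma dual_split (X Y : Submodule k V) (d : Module.Dual k V)
    (hd : ∀ z ∈ X ⊓ Y, d z = 0) :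
    ∃ d1 d2 : Module.Dual k V, (∀ z ∈ X, d1 z = 0) ∧ (∀ z ∈ Y, d2 z = 0) ∧ d = d1 + d2 := by
  obtain ⟨q, hq⟩ := Submodule.exists_isCompl ((X ⊓ Y).comap Y.subtype)
  set C : Submodule k V := q.map Y.subtype with hC
  have hCY : C ≤ Y := by
    rintro c ⟨c', _, rfl⟩; exact c'.2
  have hsupC : (X ⊓ Y) ⊔ C = Y := by
    have h1 : ((X ⊓ Y).comap Y.subtype ⊔ q).map Y.subtype = Y := by
      rw [hq.sup_eq_top, Submodule.map_top, Submodule.range_subtype]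
    rw [Submodule.map_sup] at h1
    rw [Submodule.map_comap_subtype] at h1
    rw [inf_eq_right.2 (inf_le_right : X ⊓ Y ≤ Y)] at h1
    rw [hC]
    exact h1
  have hCX : ∀ c ∈ C, c ∈ X → c = 0 := by
    rintro c ⟨c', hc', rfl⟩ hcX
    have hmem : c' ∈ (X ⊓ Y).comap Y.subtype := by
      simp only [Submodule.mem_comap]
      exact ⟨hcX, c'.2⟩
    have : c' ∈ (X ⊓ Y).comap Y.subtype ⊓ q := ⟨hmem, hc'⟩
    rw [hq.inf_eq_bot] at this
    rw [Submodule.mem_bot] at this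
    simp [this]
  obtain ⟨W, hW⟩ := Submodule.exists_isCompl (X ⊔ Y)
  have hXY_eq : X ⊔ C = X ⊔ Y := by
    refine le_antisymm (sup_le le_sup_left (hCY.trans le_sup_right)) ?_
    refine sup_le le_sup_left ?_
    rw [← hsupC]
    exact sup_le (le_trans inf_le_left le_sup_left) le_sup_right
  have hcompl : IsCompl C (X ⊔ W) := by
    constructor
    · rw [disjoint_iff_inf_le]
      rintro c ⟨hcC, hcXW⟩
      obtain ⟨xx, hxx, ww, hww, rfl⟩ := Submodule.mem_sup.1 hcXW
      have hwmem : ww ∈ (X ⊔ Y) ⊓ W := by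
        refine ⟨?_, hww⟩
        have : ww = (xx + ww) - xx := by abel
        rw [this]
        exact sub_mem (Submodule.mem_sup_right (hCY hcC)) (Submodule.mem_sup_left hxx)
      rw [hW.inf_eq_bot] at hwmem
      rw [Submodule.mem_bot] at hwmem
      rw [hwmem, add_zero] at hcC ⊢
      rw [Submodule.mem_bot]
      exact hCX xx hcC hxx
    · rw [codisjoint_iff]
      rw [← sup_assoc, sup_comm C X, hXY_eq]
      exact hW.sup_eq_top
  set π : V →ₗ[k] V := C.subtype ∘ₗ C.projectionOnto (X ⊔ W) hcompl with hπ
  have hπX : ∀ x ∈ X, π x = 0 := by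
    intro x hx
    simp only [hπ, LinearMap.comp_apply]
    rw [Submodule.projectionOnto_apply_of_mem_right hcompl (Submodule.mem_sup_left hx)]
    simp
  have hπC : ∀ c ∈ C, π c = c := by
    intro c hc
    simp only [hπ, LinearMap.comp_apply]
    rw [show c = ((⟨c, hc⟩ : C) : V) from rfl,
      Submodule.projectionOnto_apply_left hcompl]
    rfl
  refine ⟨d ∘ₗ π, d - d ∘ₗ π, ?_, ?_, by abel⟩
  · intro z hz
    simp only [LinearMap.comp_apply]
    rw [hπX z hz, map_zero]
  · intro y hyY
    have hyY' : y ∈ (X ⊓ Y) ⊔ C := by rw [hsupC]; exact hyY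
    obtain ⟨z, hz, c, hc, rfl⟩ := Submodule.mem_sup.1 hyY'
    simp only [LinearMap.sub_apply, LinearMap.comp_apply, map_add]
    rw [hπX z (Submodule.mem_inf.1 hz).1, hπC c hc, hd z hz]
    simp

end CliffordInfAux

/-- if `X` and `Y` are subspaces of a vector space `V` with a quadratic form
(over a field of characteristic `≠ 2`), then `C(X) ⊓ C(Y) = C(X ⊓ Y)` as subalgebras of
the Clifford algebra `C(V)`. -/
theorem clifford_inf_pair
    {k V : Type*} [Field k] [AddCommGroup V] [Module k V] (h2 : (2 : k) ≠ 0)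
    (Q : QuadraticForm k V) (X Y : Submodule k V) :
    Algebra.adjoin k (ι Q '' (X : Set V)) ⊓ Algebra.adjoin k (ι Q '' (Y : Set V))
      = Algebra.adjoin k (ι Q '' ((X ⊓ Y : Submodule k V) : Set V)) := by
  have h2' : Invertible (2 : k) := invertibleOfNonzero h2
  change CliffordInfAux.cA Q X ⊓ CliffordInfAux.cA Q Y = CliffordInfAux.cA Q (X ⊓ Y)
  refine le_antisymm ?_ (le_inf (CliffordInfAux.cA_mono Q inf_le_left)
    (CliffordInfAux.cA_mono Q inf_le_right))
  intro x hx
  obtain ⟨hxX, hxY⟩ := Algebra.mem_inf.1 hx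
  rw [CliffordInfAux.mem_cA_iff h2']
  intro d hd
  obtain ⟨d1, d2, hd1, hd2, rfl⟩ := CliffordInfAux.dual_split X Y d hd
  rw [map_add, LinearMap.add_apply,
    CliffordInfAux.contract_eq_zero hd1 hxX,
    CliffordInfAux.contract_eq_zero hd2 hxY, add_zero]
end

section
/- For any family {Z_λ : λ ∈ Λ} of subspaces of V, the intersection of the Clifford subalgebras ⋂_λ C(Z_λ) equals C(⋂_λ Z_λ), the subalgebra generated by the intersection of the subspaces. -/
open CliffordAlgebra

section Aux

variable {k V : Type*} [Field k] [AddCommGroup V] [Module k V]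

/-- The Clifford subalgebra generated by a subspace. -/
def CA (Q : QuadraticForm k V) (Z : Submodule k V) : Subalgebra k (CliffordAlgebra Q) :=
  Algebra.adjoin k (ι Q '' (Z : Set V))

theorem CA_mono (Q : QuadraticForm k V) {Z₁ Z₂ : Submodule k V} (h : Z₁ ≤ Z₂) :
    CA Q Z₁ ≤ CA Q Z₂ :=
  Algebra.adjoin_mono (Set.image_mono h)

/-- Contraction preserves the subalgebra generated by a subspace. -/
theorem contractLeft_mem_CA {Q : QuadraticForm k V} {Z : Submodule k V}
    (d : Module.Dual k V) {x : CliffordAlgebra Q} (hx : x ∈ CA Q Z) :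
    contractLeft (Q := Q) d x ∈ CA Q Z := by
  have key : ∀ l : List (CliffordAlgebra Q), (∀ y ∈ l, y ∈ ι Q '' (Z : Set V)) →
      contractLeft (Q := Q) d l.prod ∈ CA Q Z := by
    intro l
    induction l with
    | nil =>
      intro _
      simpa using (zero_mem (CA Q Z))
    | cons b l ih =>
      intro h
      obtain ⟨v, hv, rfl⟩ := h b List.mem_cons_self
      have hl : ∀ y ∈ l, y ∈ ι Q '' (Z : Set V) := fun y hy => h y (List.mem_cons_of_mem _ hy)
      have hprod : l.prod ∈ CA Q Z := list_prod_mem fun y hy => Algebra.subset_adjoin (hl y hy)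
      rw [List.prod_cons, contractLeft_ι_mul]
      exact sub_mem ((CA Q Z).smul_mem hprod _)
        (mul_mem (Algebra.subset_adjoin ⟨v, hv, rfl⟩) (ih hl))
  have hx' : x ∈ Submodule.span k (Submonoid.closure (ι Q '' (Z : Set V)) : Set (CliffordAlgebra Q)) := by
    have : x ∈ Subalgebra.toSubmodule (Algebra.adjoin k (ι Q '' (Z : Set V))) := hx
    rwa [Algebra.adjoin_eq_span] at this
  clear hx
  induction hx' using Submodule.span_induction with
  | mem y hy =>
    obtain ⟨l, hl, rfl⟩ := Submonoid.exists_list_of_mem_closure hy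
    exact key l hl
  | zero => simpa using (zero_mem (CA Q Z))
  | add y z _ _ hy hz => rw [map_add]; exact add_mem hy hz
  | smul c y _ hy => rw [map_smul]; exact Subalgebra.smul_mem _ hy c

/-- `changeForm` preserves the subalgebra generated by a subspace. -/
theorem changeForm_mem_CA {Q Q' : QuadraticForm k V} {B : LinearMap.BilinForm k V}
    (h : B.toQuadraticMap = Q' - Q) {Z : Submodule k V} {x : CliffordAlgebra Q}
    (hx : x ∈ CA Q Z) : changeForm h x ∈ CA Q' Z := by
  have key : ∀ l : List (CliffordAlgebra Q), (∀ y ∈ l, y ∈ ι Q '' (Z : Set V)) →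
      changeForm h l.prod ∈ CA Q' Z := by
    intro l
    induction l with
    | nil =>
      intro _
      simpa [changeForm_one] using (one_mem (CA Q' Z))
    | cons b l ih =>
      intro hb
      obtain ⟨v, hv, rfl⟩ := hb b List.mem_cons_self
      have hl : ∀ y ∈ l, y ∈ ι Q '' (Z : Set V) := fun y hy => hb y (List.mem_cons_of_mem _ hy)
      rw [List.prod_cons, changeForm_ι_mul]
      exact sub_mem (mul_mem (Algebra.subset_adjoin ⟨v, hv, rfl⟩) (ih hl))
        (contractLeft_mem_CA _ (ih hl))
  have hx' : x ∈ Submodule.span k (Submonoid.closure (ι Q '' (Z : Set V)) : Set (CliffordAlgebra Q)) := by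
    have : x ∈ Subalgebra.toSubmodule (Algebra.adjoin k (ι Q '' (Z : Set V))) := hx
    rwa [Algebra.adjoin_eq_span] at this
  clear hx
  induction hx' using Submodule.span_induction with
  | mem y hy =>
    obtain ⟨l, hl, rfl⟩ := Submonoid.exists_list_of_mem_closure hy
    exact key l hl
  | zero => simpa using (zero_mem (CA Q' Z))
  | add y z _ _ hy hz => rw [map_add]; exact add_mem hy hz
  | smul c y _ hy => rw [map_smul]; exact Subalgebra.smul_mem _ hy c

theorem mem_CA_iff_changeForm {Q Q' : QuadraticForm k V} {B : LinearMap.BilinForm k V}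
    (h : B.toQuadraticMap = Q' - Q) {Z : Submodule k V} {x : CliffordAlgebra Q} :
    x ∈ CA Q Z ↔ changeForm h x ∈ CA Q' Z := by
  constructor
  · exact changeForm_mem_CA h
  · intro hx
    have e : changeForm (changeForm.neg_proof h) (changeForm h x) = x :=
      (changeForm_changeForm _ _ x).trans <| by
        simp_rw [add_neg_cancel B, changeForm_self_apply]
    have := changeForm_mem_CA (changeForm.neg_proof h) hx
    rwa [e] at this

/-- A linear endomorphism as an isometry of the zero quadratic form. -/
def iso0 (g : V →ₗ[k] V) : (0 : QuadraticForm k V) →qᵢ (0 : QuadraticForm k V) :=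
  { g with map_app' := fun _ => rfl }

@[simp] theorem iso0_apply (g : V →ₗ[k] V) (v : V) : iso0 g v = g v := rfl

theorem map_mem_CA {Z : Submodule k V} (g : V →ₗ[k] V) {x : CliffordAlgebra (0 : QuadraticForm k V)}
    (hx : x ∈ CA 0 Z) : CliffordAlgebra.map (iso0 g) x ∈ CA 0 (Z.map g) := by
  induction hx using Algebra.adjoin_induction with
  | mem y hy =>
    obtain ⟨v, hv, rfl⟩ := hy
    rw [map_apply_ι]
    exact Algebra.subset_adjoin ⟨g v, Submodule.mem_map_of_mem hv, rfl⟩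
  | algebraMap r => rw [AlgHom.commutes]; exact algebraMap_mem _ r
  | add y z _ _ hy hz => rw [map_add]; exact add_mem hy hz
  | mul y z _ _ hy hz => rw [map_mul]; exact mul_mem hy hz

theorem map_fix_CA {Z : Submodule k V} {g : V →ₗ[k] V} (hg : ∀ z ∈ Z, g z = z)
    {x : CliffordAlgebra (0 : QuadraticForm k V)} (hx : x ∈ CA 0 Z) :
    CliffordAlgebra.map (iso0 g) x = x := by
  induction hx using Algebra.adjoin_induction with
  | mem y hy =>
    obtain ⟨v, hv, rfl⟩ := hy
    rw [map_apply_ι, iso0_apply, hg v hv]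
  | algebraMap r => rw [AlgHom.commutes]
  | add y z _ _ hy hz => rw [map_add, hy, hz]
  | mul y z _ _ hy hz => rw [map_mul, hy, hz]

/-- There is a linear endomorphism fixing `Y` and mapping `X` into `X ⊓ Y`. -/
theorem exists_retract (X Y : Submodule k V) :
    ∃ r : V →ₗ[k] V, (∀ y ∈ Y, r y = y) ∧ X.map r ≤ X ⊓ Y := by
  obtain ⟨q, hq⟩ := Submodule.exists_isCompl ((X ⊓ Y).comap X.subtype)
  set X' := q.map X.subtype with hX'
  have hsup : (X ⊓ Y) ⊔ X' = X := by
    have h1 : Submodule.map X.subtype ((X ⊓ Y).comap X.subtype) = X ⊓ Y := by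
      rw [Submodule.map_comap_subtype, ← inf_assoc, inf_idem]
    rw [hX', ← h1, ← Submodule.map_sup, hq.codisjoint.eq_top, Submodule.map_subtype_top]
  have hdisj : X' ⊓ Y = ⊥ := by
    rw [eq_bot_iff]
    rintro v ⟨hv1, hv2⟩
    obtain ⟨u, hu, rfl⟩ := hv1
    have huv : u ∈ (X ⊓ Y).comap X.subtype := by
      simp only [Submodule.mem_comap, Submodule.coe_subtype]
      exact ⟨u.2, hv2⟩
    have : u ∈ (X ⊓ Y).comap X.subtype ⊓ q := ⟨huv, hu⟩
    rw [hq.disjoint.eq_bot, Submodule.mem_bot] at this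
    simp [this]
  obtain ⟨D, hD⟩ := Submodule.exists_isCompl (X' ⊔ Y)
  have hcompl : IsCompl Y (X' ⊔ D) := by
    constructor
    · rw [disjoint_iff, eq_bot_iff]
      rintro v ⟨hvY, hvXD⟩
      obtain ⟨a, ha, d, hd, rfl⟩ := Submodule.mem_sup.mp hvXD
      have hdmem : d ∈ (X' ⊔ Y) ⊓ D := by
        refine ⟨?_, hd⟩
        rw [show d = (a + d) - a from (add_sub_cancel_left a d).symm]
        exact sub_mem (Submodule.mem_sup_right hvY) (Submodule.mem_sup_left ha)
      rw [hD.disjoint.eq_bot, Submodule.mem_bot] at hdmem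
      have hd0 : d = 0 := hdmem
      have haY : a ∈ X' ⊓ Y := ⟨ha, by simpa [hd0] using hvY⟩
      rw [hdisj, Submodule.mem_bot] at haY
      have : a = 0 := haY
      simp [this, hd0]
    · rw [codisjoint_iff, ← sup_assoc, sup_comm Y X', hD.codisjoint.eq_top]
  set r : V →ₗ[k] V := Y.subtype ∘ₗ Y.linearProjOfIsCompl _ hcompl with hr
  have hfix : ∀ y ∈ Y, r y = y := by
    intro y hy
    have h1 : Y.linearProjOfIsCompl _ hcompl y = ⟨y, hy⟩ :=
      Submodule.linearProjOfIsCompl_apply_left hcompl ⟨y, hy⟩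
    simp [hr, h1]
  have hkill : ∀ w ∈ X', r w = 0 := by
    intro w hw
    have hwC : w ∈ X' ⊔ D := Submodule.mem_sup_left hw
    have h1 : Y.linearProjOfIsCompl _ hcompl w = 0 :=
      Submodule.linearProjOfIsCompl_apply_right hcompl ⟨w, hwC⟩
    simp [hr, h1]
  refine ⟨r, hfix, ?_⟩
  refine le_trans (Submodule.map_mono hsup.ge) ?_
  rw [Submodule.map_sup]
  apply sup_le
  · rintro _ ⟨w, hw, rfl⟩
    have hw' : w ∈ X ⊓ Y := hw
    rw [hfix w hw'.2]
    exact hw'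
  · rintro _ ⟨w, hw, rfl⟩
    rw [hkill w hw]
    exact zero_mem _

/-- Pairwise intersection for the exterior (zero-form) case. -/
theorem CA0_inf (X Y : Submodule k V) :
    CA (0 : QuadraticForm k V) X ⊓ CA 0 Y = CA 0 (X ⊓ Y) := by
  apply le_antisymm
  · rintro x hx
    obtain ⟨hx1, hx2⟩ := Algebra.mem_inf.mp hx
    obtain ⟨r, hr1, hr2⟩ := exists_retract X Y
    have hfix : CliffordAlgebra.map (iso0 r) x = x := map_fix_CA hr1 hx2
    have himg := map_mem_CA r hx1
    rw [hfix] at himg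
    exact CA_mono _ hr2 himg
  · exact le_inf (CA_mono _ inf_le_left) (CA_mono _ inf_le_right)

/-- Every element lies in the subalgebra generated by a finitely generated subspace. -/
theorem exists_fg_mem_CA (Q : QuadraticForm k V) (x : CliffordAlgebra Q) :
    ∃ W : Submodule k V, W.FG ∧ x ∈ CA Q W := by
  induction x using CliffordAlgebra.induction with
  | algebraMap r => exact ⟨⊥, Submodule.fg_bot, algebraMap_mem _ r⟩
  | ι v =>
    exact ⟨Submodule.span k {v}, Submodule.fg_span_singleton v,
      Algebra.subset_adjoin ⟨v, Submodule.mem_span_singleton_self v, rfl⟩⟩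
  | mul a b ha hb =>
    obtain ⟨W₁, h₁, m₁⟩ := ha
    obtain ⟨W₂, h₂, m₂⟩ := hb
    exact ⟨W₁ ⊔ W₂, h₁.sup h₂, mul_mem (CA_mono _ le_sup_left m₁) (CA_mono _ le_sup_right m₂)⟩
  | add a b ha hb =>
    obtain ⟨W₁, h₁, m₁⟩ := ha
    obtain ⟨W₂, h₂, m₂⟩ := hb
    exact ⟨W₁ ⊔ W₂, h₁.sup h₂, add_mem (CA_mono _ le_sup_left m₁) (CA_mono _ le_sup_right m₂)⟩

/-- Main theorem for the exterior (zero-form) case. -/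
theorem iInf_CA0 {Λ : Type*} (Z : Λ → Submodule k V) :
    (⨅ l, CA (0 : QuadraticForm k V) (Z l)) = CA 0 (⨅ l, Z l) := by
  classical
  apply le_antisymm
  · intro x hx
    rw [Algebra.mem_iInf] at hx
    obtain ⟨W, hWfg, hxW⟩ := exists_fg_mem_CA (0 : QuadraticForm k V) x
    haveI : FiniteDimensional k W := (Submodule.fg_iff_finiteDimensional W).mp hWfg
    set F : Finset Λ → Submodule k V := fun s => W ⊓ s.inf Z with hF
    haveI inst : ∀ s, FiniteDimensional k (F s) :=
      fun s => Submodule.finiteDimensional_of_le inf_le_left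
    have hS : {n | ∃ s, Module.finrank k (F s) = n}.Nonempty := ⟨_, ∅, rfl⟩
    obtain ⟨s₀, hs₀⟩ := Nat.sInf_mem hS
    have hmin : ∀ l, F s₀ ≤ Z l := by
      intro l
      have hle : F (insert l s₀) ≤ F s₀ :=
        inf_le_inf_left W (Finset.inf_mono (s₀.subset_insert l))
      have hrank : Module.finrank k (F s₀) ≤ Module.finrank k (F (insert l s₀)) := by
        rw [hs₀]
        exact Nat.sInf_le ⟨insert l s₀, rfl⟩
      have heq : F (insert l s₀) = F s₀ := Submodule.eq_of_le_of_finrank_le hle hrank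
      calc F s₀ = F (insert l s₀) := heq.symm
        _ ≤ (insert l s₀).inf Z := inf_le_right
        _ ≤ Z l := Finset.inf_le (Finset.mem_insert_self l s₀)
    have hxs : ∀ s : Finset Λ, x ∈ CA (0 : QuadraticForm k V) (F s) := by
      intro s
      induction s using Finset.induction_on with
      | empty => simpa [hF] using hxW
      | insert a s hns ih =>
        have hmem : x ∈ CA (0 : QuadraticForm k V) (F s) ⊓ CA 0 (Z a) :=
          Algebra.mem_inf.mpr ⟨ih, hx a⟩
        rw [CA0_inf] at hmem
        have : F (insert a s) = F s ⊓ Z a := by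
          rw [hF]
          simp only [Finset.inf_insert]
          rw [inf_comm (Z a), ← inf_assoc]
        rw [this]
        exact hmem
    exact CA_mono _ (le_iInf hmin) (hxs s₀)
  · exact le_iInf fun l => CA_mono _ (iInf_le Z l)

end Aux

/-- for any family `{Z_λ}` of subspaces of `V` (a vector space with a quadratic
form over a field of characteristic `≠ 2`), the intersection of the Clifford subalgebras
`⋂_λ C(Z_λ)` equals `C(⋂_λ Z_λ)`. -/
theorem clifford_iInf
    {k V : Type*} [Field k] [AddCommGroup V] [Module k V] (h2 : (2 : k) ≠ 0)
    (Q : QuadraticForm k V) {Λ : Type*} (Z : Λ → Submodule k V) :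
    (⨅ l, Algebra.adjoin k (ι Q '' (Z l : Set V)))
      = Algebra.adjoin k (ι Q '' ((⨅ l, Z l : Submodule k V) : Set V)) := by
  haveI : Invertible (2 : k) := invertibleOfNonzero h2
  have h := changeForm.associated_neg_proof (R := k) (M := V) (Q := Q)
  ext x
  rw [Algebra.mem_iInf]
  have key : ∀ Z' : Submodule k V,
      (x ∈ Algebra.adjoin k (ι Q '' (Z' : Set V)) ↔ changeForm h x ∈ CA 0 Z') :=
    fun Z' => mem_CA_iff_changeForm h (Z := Z')
  simp only [key]
  rw [← Algebra.mem_iInf (S := fun l => CA (0 : QuadraticForm k V) (Z l)), iInf_CA0]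
end

section
/- Let u ∈ V be a unit vector ((u|u) = 1). Then C(V) = C(u^⊥) ⊕ u·C(u^⊥) as a direct sum of vector spaces; moreover C(u^⊥) = {a ∈ C(V) : u·a·u = γ(a)} and u·C(u^⊥) = {a ∈ C(V) : u·a·u = -γ(a)}. -/
open CliffordAlgebra
open scoped RealInnerProductSpace

/-- The quadratic form `v ↦ ⟪v, v⟫` of a real inner product space. -/
noncomputable def QOfInner (V : Type*) [NormedAddCommGroup V] [InnerProductSpace ℝ V] :
    QuadraticForm ℝ V :=
  LinearMap.BilinMap.toQuadraticMap (innerₗ V : LinearMap.BilinForm ℝ V)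

section Aux

variable {V : Type*} [NormedAddCommGroup V] [InnerProductSpace ℝ V]

lemma QOfInner_apply (v : V) : QOfInner V v = ⟪v, v⟫ := by
  simp [QOfInner, LinearMap.BilinMap.toQuadraticMap_apply]

lemma QOfInner_isOrtho {u v : V} (h : ⟪u, v⟫ = 0) : (QOfInner V).IsOrtho u v := by
  have h2 : ⟪v, u⟫ = 0 := by rw [real_inner_comm]; exact h
  simp [QuadraticMap.isOrtho_def, QOfInner_apply, inner_add_add_self, norm_add_sq_real, h, h2]

variable (u : V)

local notation "A" => Algebra.adjoin ℝ (ι (QOfInner V) '' (((ℝ ∙ u)ᗮ) : Set V))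
local notation "U" => ι (QOfInner V) u

lemma hUU (hu : ⟪u, u⟫ = 1) : U * U = 1 := by
  rw [ι_sq_scalar, QOfInner_apply, hu, map_one]

lemma comm_of_mem {a : CliffordAlgebra (QOfInner V)} (ha : a ∈ A) :
    U * a = involute a * U := by
  induction ha using Algebra.adjoin_induction with
  | mem x hx =>
    obtain ⟨v, hv, rfl⟩ := hx
    have hv' : ⟪u, v⟫ = 0 := Submodule.mem_orthogonal_singleton_iff_inner_right.mp hv
    rw [involute_ι, ι_mul_ι_comm_of_isOrtho (QOfInner_isOrtho hv'), neg_mul]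
  | algebraMap r => rw [involute.commutes, Algebra.commutes]
  | add x y hx hy ihx ihy => rw [map_add, add_mul, mul_add, ihx, ihy]
  | mul x y hx hy ihx ihy =>
    rw [← mul_assoc, ihx, mul_assoc, ihy, ← mul_assoc, map_mul]

lemma involute_mem {a : CliffordAlgebra (QOfInner V)} (ha : a ∈ A) :
    involute a ∈ A := by
  induction ha using Algebra.adjoin_induction with
  | mem x hx =>
    obtain ⟨v, hv, rfl⟩ := hx
    rw [involute_ι]
    exact neg_mem (Algebra.subset_adjoin ⟨v, hv, rfl⟩)
  | algebraMap r => rw [involute.commutes]; exact algebraMap_mem _ r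
  | add x y hx hy ihx ihy => rw [map_add]; exact add_mem ihx ihy
  | mul x y hx hy ihx ihy => rw [map_mul]; exact mul_mem ihx ihy

lemma comm_of_mem' {a : CliffordAlgebra (QOfInner V)} (ha : a ∈ A) :
    a * U = U * involute a := by
  have := comm_of_mem u (involute_mem u ha)
  rwa [involute_involute, eq_comm] at this

lemma uau_of_mem (hu : ⟪u, u⟫ = 1) {a : CliffordAlgebra (QOfInner V)} (ha : a ∈ A) :
    U * a * U = involute a := by
  rw [comm_of_mem u ha, mul_assoc, hUU u hu, mul_one]

end Aux

section Main

variable {V : Type*} [NormedAddCommGroup V] [InnerProductSpace ℝ V] (u : V)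

local notation "A" => Algebra.adjoin ℝ (ι (QOfInner V) '' (((ℝ ∙ u)ᗮ) : Set V))
local notation "U" => ι (QOfInner V) u
local notation "MM" => Submodule.map (LinearMap.mulLeft ℝ (ι (QOfInner V) u))
    (Subalgebra.toSubmodule (Algebra.adjoin ℝ (ι (QOfInner V) '' (((ℝ ∙ u)ᗮ) : Set V))))

lemma sup_eq_top (hu : ⟪u, u⟫ = 1) : Subalgebra.toSubmodule A ⊔ MM = ⊤ := by
  ext x
  simp only [Submodule.mem_top, iff_true]
  induction x using CliffordAlgebra.induction with
  | algebraMap r => exact Submodule.mem_sup_left (algebraMap_mem A r)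
  | ι v =>
    have hw : v - ⟪u, v⟫ • u ∈ (ℝ ∙ u)ᗮ := by
      rw [Submodule.mem_orthogonal_singleton_iff_inner_right, inner_sub_right,
        real_inner_smul_right, hu, mul_one, sub_self]
    have h1 : ι (QOfInner V) (v - ⟪u, v⟫ • u) ∈ Subalgebra.toSubmodule A :=
      Algebra.subset_adjoin ⟨_, hw, rfl⟩
    have h2 : (⟪u, v⟫ : ℝ) • U ∈ MM :=
      Submodule.smul_mem _ _ ⟨1, one_mem A, by simp [LinearMap.mulLeft_apply]⟩
    have hv : ι (QOfInner V) v = ι (QOfInner V) (v - ⟪u, v⟫ • u) + ⟪u, v⟫ • U := by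
      rw [map_sub, map_smul, sub_add_cancel]
    rw [hv]
    exact add_mem (Submodule.mem_sup_left h1) (Submodule.mem_sup_right h2)
  | mul x y hx hy =>
    obtain ⟨a, ha, b', hb', hab⟩ := Submodule.mem_sup.mp hx
    obtain ⟨c, hc, d', hd', hcd⟩ := Submodule.mem_sup.mp hy
    obtain ⟨b, hb, rfl⟩ := hb'
    obtain ⟨d, hd, rfl⟩ := hd'
    have ha' : a ∈ A := ha
    have hb' : b ∈ A := hb
    have hc' : c ∈ A := hc
    have hd' : d ∈ A := hd
    have e1 : a * U = U * involute a := comm_of_mem' u ha'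
    have e2 : b * U = U * involute b := comm_of_mem' u hb'
    have e3 : U * U = 1 := hUU u hu
    have t1 : a * (U * d) = U * (involute a * d) := by rw [← mul_assoc, e1, mul_assoc]
    have t2 : (U * b) * (U * d) = involute b * d := by
      rw [mul_assoc, ← mul_assoc b U d, e2, ← mul_assoc, ← mul_assoc, e3, one_mul]
    have t3 : (U * b) * c = U * (b * c) := mul_assoc _ _ _
    have key : (a + U * b) * (c + U * d)
        = (a * c + involute b * d) + U * (involute a * d + b * c) := by
      rw [add_mul, mul_add, mul_add, t1, t2, t3, mul_add]
      abel
    rw [← hab, ← hcd]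
    simp only [LinearMap.mulLeft_apply]
    rw [key]
    refine add_mem (Submodule.mem_sup_left ?_) (Submodule.mem_sup_right ?_)
    · have hm : a * c + involute b * d ∈ A :=
        add_mem (mul_mem ha' hc') (mul_mem (involute_mem u hb') hd')
      exact hm
    · have hm : involute a * d + b * c ∈ A :=
        add_mem (mul_mem (involute_mem u ha') hd') (mul_mem hb' hc')
      exact ⟨involute a * d + b * c, hm, rfl⟩
  | add x y hx hy => exact add_mem hx hy

lemma two_torsion_free {x : CliffordAlgebra (QOfInner V)} (h : x = -x) : x = 0 := by
  have : (2 : ℝ) • x = 0 := by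
    rw [two_smul]
    exact add_eq_zero_iff_eq_neg.mpr h
  simpa [smul_eq_zero] using this

lemma U_cancel (hu : ⟪u, u⟫ = 1) {x : CliffordAlgebra (QOfInner V)} (h : U * x = 0) : x = 0 := by
  have h2 : U * (U * x) = 0 := by rw [h, mul_zero]
  rwa [← mul_assoc, hUU u hu, one_mul] at h2

lemma disj (hu : ⟪u, u⟫ = 1) : Disjoint (Subalgebra.toSubmodule A) MM := by
  rw [Submodule.disjoint_def]
  rintro x hx ⟨b, hb, rfl⟩
  have hb' : b ∈ A := hb
  simp only [LinearMap.mulLeft_apply]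
  have h1 : U * (U * b) * U = involute (U * b) := uau_of_mem u hu hx
  rw [← mul_assoc, hUU u hu, one_mul, comm_of_mem' u hb', map_mul, involute_ι, neg_mul] at h1
  have h2 : involute b = 0 := U_cancel u hu (two_torsion_free h1)
  have h3 : b = 0 := by
    have := congrArg involute h2
    simpa using this
  rw [h3, mul_zero]

end Main

/-- for a unit vector `u` in a real inner product space `V`, one has the
vector-space direct sum `C(V) = C(u^⊥) ⊕ u·C(u^⊥)`; moreover
`C(u^⊥) = {a | u·a·u = γ(a)}` and `u·C(u^⊥) = {a | u·a·u = -γ(a)}`. -/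
theorem clifford_unit_vector_decomposition
    {V : Type*} [NormedAddCommGroup V] [InnerProductSpace ℝ V]
    (u : V) (hu : ⟪u, u⟫ = 1) :
    IsCompl
      (Subalgebra.toSubmodule (Algebra.adjoin ℝ (ι (QOfInner V) '' (((ℝ ∙ u)ᗮ) : Set V))))
      (Submodule.map (LinearMap.mulLeft ℝ (ι (QOfInner V) u))
        (Subalgebra.toSubmodule
          (Algebra.adjoin ℝ (ι (QOfInner V) '' (((ℝ ∙ u)ᗮ) : Set V))))) ∧
    ((Algebra.adjoin ℝ (ι (QOfInner V) '' (((ℝ ∙ u)ᗮ) : Set V)) :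
        Set (CliffordAlgebra (QOfInner V)))
      = {a | ι (QOfInner V) u * a * ι (QOfInner V) u = involute a}) ∧
    ((Submodule.map (LinearMap.mulLeft ℝ (ι (QOfInner V) u))
        (Subalgebra.toSubmodule
          (Algebra.adjoin ℝ (ι (QOfInner V) '' (((ℝ ∙ u)ᗮ) : Set V)))) :
        Set (CliffordAlgebra (QOfInner V)))
      = {a | ι (QOfInner V) u * a * ι (QOfInner V) u = - involute a}) := by
  set U := ι (QOfInner V) u with hU
  set A := Algebra.adjoin ℝ (ι (QOfInner V) '' (((ℝ ∙ u)ᗮ) : Set V)) with hA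
  have decomp : ∀ a : CliffordAlgebra (QOfInner V),
      ∃ b c, b ∈ A ∧ c ∈ A ∧ a = b + U * c := by
    intro a
    have htop : a ∈ Subalgebra.toSubmodule A ⊔ Submodule.map (LinearMap.mulLeft ℝ U)
        (Subalgebra.toSubmodule A) := by
      rw [sup_eq_top u hu]; exact Submodule.mem_top
    obtain ⟨b, hb, c', hc', habc⟩ := Submodule.mem_sup.mp htop
    obtain ⟨c, hc, rfl⟩ := hc'
    exact ⟨b, c, hb, hc, by rw [← habc]; rfl⟩
  have lhs : ∀ b c, b ∈ A → c ∈ A →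
      U * (b + U * c) * U = involute b + U * involute c := by
    intro b c hb hc
    rw [mul_add, add_mul, uau_of_mem u hu hb, ← mul_assoc U U c, hUU u hu, one_mul,
      comm_of_mem' u hc]
  have rhs : ∀ b c : CliffordAlgebra (QOfInner V),
      involute (b + U * c) = involute b - U * involute c := by
    intro b c
    rw [map_add, map_mul, hU, involute_ι, neg_mul, ← sub_eq_add_neg]
  refine ⟨⟨disj u hu, codisjoint_iff.mpr (sup_eq_top u hu)⟩, ?_, ?_⟩
  · ext a
    simp only [SetLike.mem_coe, Set.mem_setOf_eq]
    constructor
    · exact fun ha => uau_of_mem u hu ha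
    · intro h
      obtain ⟨b, c, hb, hc, rfl⟩ := decomp a
      rw [lhs b c hb hc, rhs b c, sub_eq_add_neg] at h
      have h2 : U * involute c = 0 := two_torsion_free (add_left_cancel h)
      have hc0 : c = 0 := by
        have := congrArg involute (U_cancel u hu h2)
        simpa using this
      rw [hc0, mul_zero, add_zero]
      exact hb
  · ext a
    simp only [SetLike.mem_coe, Set.mem_setOf_eq, Submodule.mem_map]
    constructor
    · rintro ⟨b, hb, rfl⟩
      have hb' : b ∈ A := hb
      simp only [LinearMap.mulLeft_apply]
      rw [← mul_assoc U U b, hUU u hu, one_mul, comm_of_mem' u hb', map_mul, hU,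
        involute_ι, neg_mul, neg_neg]
    · intro h
      obtain ⟨b, c, hb, hc, rfl⟩ := decomp a
      rw [lhs b c hb hc, rhs b c, neg_sub, sub_eq_add_neg, add_comm (U * involute c)] at h
      have h2 : involute b = 0 := two_torsion_free (add_right_cancel h)
      have hb0 : b = 0 := by
        have := congrArg involute h2
        simpa using this
      rw [hb0, zero_add]
      exact ⟨c, hc, rfl⟩
end

section
/- For a unit vector u ∈ V, the map P_u : C(V) → C(V), P_u(a) = (a + u·γ(a)·u)/2, is a linear projector (P_u² = P_u) with image C(u^⊥) and kernel u·C(u^⊥). -/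
open CliffordAlgebra
open scoped RealInnerProductSpace

/-- The linear map `P_u : C(V) → C(V)`, `a ↦ (a + u·γ(a)·u)/2`. -/
noncomputable def Pu {V : Type*} [NormedAddCommGroup V] [InnerProductSpace ℝ V] (u : V) :
    CliffordAlgebra (QOfInner V) →ₗ[ℝ] CliffordAlgebra (QOfInner V) :=
  (1 / 2 : ℝ) • (LinearMap.id
    + (LinearMap.mulLeft ℝ (ι (QOfInner V) u)) ∘ₗ (LinearMap.mulRight ℝ (ι (QOfInner V) u))
        ∘ₗ (involute (Q := QOfInner V)).toLinearMap)

/-- for a unit vector `u`, the map `P_u(a) = (a + u·γ(a)·u)/2` is a linear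
projector with image `C(u^⊥)` and kernel `u·C(u^⊥)`. -/
theorem Pu_projector
    {V : Type*} [NormedAddCommGroup V] [InnerProductSpace ℝ V]
    (u : V) (hu : ⟪u, u⟫ = 1) :
    Pu u ∘ₗ Pu u = Pu u ∧
    LinearMap.range (Pu u)
      = Subalgebra.toSubmodule
          (Algebra.adjoin ℝ (ι (QOfInner V) '' (((ℝ ∙ u)ᗮ) : Set V))) ∧
    LinearMap.ker (Pu u)
      = Submodule.map (LinearMap.mulLeft ℝ (ι (QOfInner V) u))
          (Subalgebra.toSubmodule
            (Algebra.adjoin ℝ (ι (QOfInner V) '' (((ℝ ∙ u)ᗮ) : Set V)))) := by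
  set Q := QOfInner V with hQ
  set c := ι Q u with hc
  set A := Algebra.adjoin ℝ (ι Q '' (((ℝ ∙ u)ᗮ) : Set V)) with hA
  have hQu : Q u = 1 := by
    rw [hQ, QOfInner, LinearMap.BilinMap.toQuadraticMap_apply]; exact hu
  have hcc : c * c = 1 := by rw [hc, ι_sq_scalar, hQu, map_one]
  have hanti : ∀ v ∈ (ℝ ∙ u)ᗮ, c * ι Q v = -(ι Q v * c) := by
    intro v hv
    have h1 : ⟪u, v⟫ = 0 := Submodule.mem_orthogonal_singleton_iff_inner_right.mp hv
    have hpolar : QuadraticMap.polar Q u v = 0 := by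
      rw [hQ, QOfInner, LinearMap.BilinMap.polar_toQuadraticMap]
      have h1' : ⟪v, u⟫ = 0 := by rw [real_inner_comm]; exact h1
      simp [innerₗ_apply_apply, h1, h1']
    have h2 := ι_mul_ι_add_swap (Q := Q) u v
    rw [hpolar, map_zero] at h2
    exact eq_neg_of_add_eq_zero_left h2
  have hPu : ∀ x : CliffordAlgebra Q,
      Pu u x = (1 / 2 : ℝ) • (x + c * (involute x * c)) := by
    intro x
    simp [Pu, LinearMap.smul_apply, LinearMap.add_apply, LinearMap.comp_apply,
      LinearMap.mulLeft_apply, LinearMap.mulRight_apply]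
    rfl
  -- key: for a ∈ A, involute a ∈ A and c * a = involute a * c
  have hkey : ∀ a ∈ A, involute (Q := Q) a ∈ A ∧ c * a = involute a * c := by
    intro a ha
    induction ha using Algebra.adjoin_induction with
    | mem x hx =>
      obtain ⟨v, hv, rfl⟩ := hx
      refine ⟨?_, ?_⟩
      · rw [involute_ι]
        exact neg_mem (Algebra.subset_adjoin ⟨v, hv, rfl⟩)
      · rw [involute_ι, neg_mul]
        exact hanti v hv
    | algebraMap r =>
      refine ⟨?_, ?_⟩
      · rw [AlgHom.commutes]; exact algebraMap_mem A r
      · rw [AlgHom.commutes]; exact (Algebra.commutes r c).symm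
    | add x y hx hy ihx ihy =>
      refine ⟨by rw [map_add]; exact add_mem ihx.1 ihy.1, ?_⟩
      rw [map_add, mul_add, add_mul, ihx.2, ihy.2]
    | mul x y hx hy ihx ihy =>
      refine ⟨by rw [map_mul]; exact mul_mem ihx.1 ihy.1, ?_⟩
      rw [map_mul, ← mul_assoc, ihx.2, mul_assoc, ihy.2, mul_assoc]
  have hinvmem : ∀ a ∈ A, involute (Q := Q) a ∈ A := fun a ha => (hkey a ha).1
  have hcomm : ∀ a ∈ A, c * a = involute a * c := fun a ha => (hkey a ha).2
  have hcomm' : ∀ a ∈ A, a * c = c * involute a := by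
    intro a ha
    have h := hcomm _ (hinvmem a ha)
    rwa [involute_involute, eq_comm] at h
  -- P_u is identity on A
  have L1 : ∀ a ∈ A, Pu u a = a := by
    intro a ha
    rw [hPu, ← hcomm a ha, ← mul_assoc, hcc, one_mul, ← two_smul ℝ a, smul_smul]
    norm_num
  -- P_u kills c * A
  have L2 : ∀ a ∈ A, Pu u (c * a) = 0 := by
    intro a ha
    have h1 : involute (Q := Q) (c * a) * c = -a := by
      rw [map_mul, hc, involute_ι, ← hc, neg_mul, neg_mul, mul_assoc, ← hcomm a ha,
        ← mul_assoc, hcc, one_mul]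
    rw [hPu, h1, mul_neg, add_neg_cancel, smul_zero]
  -- decomposition: every x is a + c * b with a, b ∈ A
  have hdec : ∀ x : CliffordAlgebra Q, ∃ a ∈ A, ∃ b ∈ A, x = a + c * b := by
    intro x
    induction x using CliffordAlgebra.induction with
    | algebraMap r =>
      exact ⟨algebraMap ℝ _ r, algebraMap_mem A r, 0, zero_mem A, by rw [mul_zero, add_zero]⟩
    | ι v =>
      set w := v - ⟪u, v⟫ • u with hw
      have hwperp : w ∈ (ℝ ∙ u)ᗮ := by
        rw [Submodule.mem_orthogonal_singleton_iff_inner_right, hw, inner_sub_right,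
          real_inner_smul_right, hu, mul_one, sub_self]
      refine ⟨ι Q w, Algebra.subset_adjoin ⟨w, hwperp, rfl⟩,
        algebraMap ℝ _ ⟪u, v⟫, algebraMap_mem A _, ?_⟩
      rw [← Algebra.commutes, ← Algebra.smul_def, hw, map_sub, map_smul, ← hc]
      abel
    | add x y ihx ihy =>
      obtain ⟨a, ha, b, hb, rfl⟩ := ihx
      obtain ⟨a', ha', b', hb', rfl⟩ := ihy
      exact ⟨a + a', add_mem ha ha', b + b', add_mem hb hb', by rw [mul_add]; abel⟩
    | mul x y ihx ihy =>
      obtain ⟨a, ha, b, hb, rfl⟩ := ihx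
      obtain ⟨a', ha', b', hb', rfl⟩ := ihy
      refine ⟨a * a' + involute b * b',
        add_mem (mul_mem ha ha') (mul_mem (hinvmem b hb) hb'),
        involute a * b' + b * a',
        add_mem (mul_mem (hinvmem a ha) hb') (mul_mem hb ha'), ?_⟩
      have e1 : a * (c * b') = c * (involute a * b') := by
        rw [← mul_assoc, hcomm' a ha, mul_assoc]
      have e2 : c * b * (c * b') = involute b * b' := by
        rw [mul_assoc, ← mul_assoc b c b', hcomm' b hb, ← mul_assoc, ← mul_assoc, hcc,
          one_mul]
      rw [add_mul, mul_add, mul_add, e1, e2, mul_add c (involute a * b') (b * a'), mul_assoc c b a']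
      abel
  have L3 : ∀ x, Pu u x ∈ A := by
    intro x
    obtain ⟨a, ha, b, hb, rfl⟩ := hdec x
    rw [map_add, L1 a ha, L2 b hb, add_zero]
    exact ha
  refine ⟨?_, ?_, ?_⟩
  · ext x
    exact L1 _ (L3 x)
  · apply le_antisymm
    · rintro y ⟨x, rfl⟩
      exact L3 x
    · intro x hx
      exact ⟨x, L1 x hx⟩
  · apply le_antisymm
    · intro x hx
      rw [LinearMap.mem_ker] at hx
      obtain ⟨a, ha, b, hb, rfl⟩ := hdec x
      rw [map_add, L1 a ha, L2 b hb, add_zero] at hx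
      rw [hx, zero_add]
      exact ⟨b, hb, rfl⟩
    · rintro y ⟨b, hb, rfl⟩
      rw [LinearMap.mem_ker, LinearMap.mulLeft_apply]
      exact L2 b hb
end

section
/- If u₁ and u₂ are orthonormal vectors in V (so (uᵢ|uⱼ) = δᵢⱼ), then the projectors P_{u₁} and P_{u₂} on C(V) commute: P_{u₁} ∘ P_{u₂} = P_{u₂} ∘ P_{u₁}, where P_u(a) = (a + u·γ(a)·u)/2. -/
open CliffordAlgebra
open scoped RealInnerProductSpace

/-- if `u₁`, `u₂` are orthonormal vectors of a real inner product space,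
then the projectors `P_{u₁}` and `P_{u₂}` commute. -/
theorem Pu_commute
    {V : Type*} [NormedAddCommGroup V] [InnerProductSpace ℝ V]
    (u₁ u₂ : V) (h11 : ⟪u₁, u₁⟫ = 1) (h22 : ⟪u₂, u₂⟫ = 1) (h12 : ⟪u₁, u₂⟫ = 0) :
    Pu u₁ ∘ₗ Pu u₂ = Pu u₂ ∘ₗ Pu u₁ := by
  set x := ι (QOfInner V) u₁ with hx
  set y := ι (QOfInner V) u₂ with hy
  have hanti : x * y + y * x = 0 := by
    rw [hx, hy, ι_mul_ι_add_swap]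
    have : QuadraticMap.polar (QOfInner V) u₁ u₂ = 0 := by
      simp only [QOfInner, QuadraticMap.polar, LinearMap.BilinMap.toQuadraticMap_apply,
        innerₗ_apply_apply, LinearMap.mk₂_apply, LinearMap.flip_apply,
        LinearMap.mk₂'ₛₗ_apply, inner_add_add_self, h11, h22, h12]
      rw [real_inner_comm]; linarith
    rw [this, map_zero]
  have hxy : x * y = -(y * x) := by rw [eq_neg_iff_add_eq_zero]; exact hanti
  have hyx : y * x = -(x * y) := by rw [eq_neg_iff_add_eq_zero, add_comm]; exact hanti
  have hix : involute x = -x := by rw [hx]; exact involute_ι u₁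
  have hiy : involute y = -y := by rw [hy]; exact involute_ι u₂
  ext a
  simp only [LinearMap.comp_apply, Pu, LinearMap.smul_apply, LinearMap.add_apply,
    LinearMap.id_apply, AlgHom.toLinearMap_apply, LinearMap.mulLeft_apply,
    LinearMap.mulRight_apply, map_smul, map_add, map_mul, involute_involute,
    smul_add, mul_smul_comm, smul_mul_assoc, ← hx, ← hy, hix, hiy, neg_mul, mul_neg, neg_neg]
  have key : x * (y * (a * y) * x) = y * (x * (a * x) * y) := by
    have h1 : x * (y * (a * y) * x) = (x * y) * a * (y * x) := by noncomm_ring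
    have h2 : y * (x * (a * x) * y) = (y * x) * a * (x * y) := by noncomm_ring
    rw [h1, h2, hxy, hyx]; noncomm_ring
  rw [key]
  abel
end

section
/- The projector E_M is a conditional expectation: for all a ∈ C(V) and all b, c in the supercommutant C(M)' (equivalently, in C(M^⊥)), one has E_M(b·a·c) = b·E_M(a)·c. -/
open CliffordAlgebra
open scoped RealInnerProductSpace

/-- The composite `E_M = P_{u_m} ∘ ⋯ ∘ P_{u₁}`. -/
noncomputable def EM {V : Type*} [NormedAddCommGroup V] [InnerProductSpace ℝ V]
    {m : ℕ} (u : Fin m → V) :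
    CliffordAlgebra (QOfInner V) →ₗ[ℝ] CliffordAlgebra (QOfInner V) :=
  (List.ofFn fun i => Pu (u i)).foldl (fun f g => g ∘ₗ f) LinearMap.id

lemma Pu_inter {V : Type*} [NormedAddCommGroup V] [InnerProductSpace ℝ V]
    (u0 : V) (b c a : CliffordAlgebra (QOfInner V))
    (hb : ι (QOfInner V) u0 * b = involute b * ι (QOfInner V) u0)
    (hc : ι (QOfInner V) u0 * c = involute c * ι (QOfInner V) u0) :
    Pu u0 (b * a * c) = b * Pu u0 a * c := by
  have hb' : ι (QOfInner V) u0 * involute b = b * ι (QOfInner V) u0 := by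
    have h := congrArg involute hb
    simp only [map_mul, involute_ι, involute_involute, neg_mul, mul_neg, neg_inj] at h
    exact h
  set w := ι (QOfInner V) u0 with hw
  have key : w * (involute b * involute a * involute c * w)
      = b * (w * (involute a * w)) * c := by
    have h1 : w * (involute b * involute a * involute c * w)
        = (w * involute b) * involute a * (involute c * w) := by noncomm_ring
    rw [h1, hb', ← hc]
    noncomm_ring
  simp only [Pu, LinearMap.smul_apply, LinearMap.add_apply, LinearMap.id_apply,
    LinearMap.comp_apply, LinearMap.mulLeft_apply, LinearMap.mulRight_apply,
    AlgHom.toLinearMap_apply, map_mul, ← hw]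
  rw [key]
  simp [mul_add, add_mul, mul_smul_comm, smul_mul_assoc, mul_assoc]

lemma foldl_inter {V : Type*} [NormedAddCommGroup V] [InnerProductSpace ℝ V]
    (b c : CliffordAlgebra (QOfInner V))
    (L : List (CliffordAlgebra (QOfInner V) →ₗ[ℝ] CliffordAlgebra (QOfInner V)))
    (hL : ∀ f ∈ L, ∀ a, f (b * a * c) = b * f a * c) :
    ∀ g : CliffordAlgebra (QOfInner V) →ₗ[ℝ] CliffordAlgebra (QOfInner V),
      (∀ a, g (b * a * c) = b * g a * c) →
      ∀ a, (L.foldl (fun f g => g ∘ₗ f) g) (b * a * c)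
        = b * (L.foldl (fun f g => g ∘ₗ f) g) a * c := by
  induction L with
  | nil => intro g hg a; simpa using hg a
  | cons f t ih =>
      intro g hg a
      simp only [List.foldl_cons]
      exact ih (fun f' hf' => hL f' (List.mem_cons_of_mem _ hf')) (f ∘ₗ g)
        (fun a => by
          simp only [LinearMap.comp_apply, hg a, hL f List.mem_cons_self]) a

/-- `E_M` is a conditional expectation: for `a ∈ C(V)` and `b`, `c` in the
supercommutant `C(M)' = {x | w·x = γ(x)·w for all w ∈ M}` of `C(M)` (where
`M = span{u₁,…,u_m}` for an orthonormal set `{uᵢ}`), one has `E_M(b·a·c) = b·E_M(a)·c`. -/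
theorem EM_conditional_expectation
    {V : Type*} [NormedAddCommGroup V] [InnerProductSpace ℝ V]
    {m : ℕ} (u : Fin m → V) (hu : Orthonormal ℝ u)
    (a b c : CliffordAlgebra (QOfInner V))
    (hb : ∀ w ∈ Submodule.span ℝ (Set.range u),
      ι (QOfInner V) w * b = involute b * ι (QOfInner V) w)
    (hc : ∀ w ∈ Submodule.span ℝ (Set.range u),
      ι (QOfInner V) w * c = involute c * ι (QOfInner V) w) :
    EM u (b * a * c) = b * EM u a * c := by
  refine foldl_inter b c _ ?_ LinearMap.id (fun a => rfl) a
  intro f hf a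
  obtain ⟨i, rfl⟩ := List.mem_ofFn.mp hf
  have hmem : u i ∈ Submodule.span ℝ (Set.range u) :=
    Submodule.subset_span ⟨i, rfl⟩
  exact Pu_inter (u i) b c a (hb _ hmem) (hc _ hmem)
end

section
/- For any subspace W of V_ℂ, the supercommutant of C(W) in C(V_ℂ) equals C(W^⊥): an element a ∈ C(V_ℂ) satisfies w·a = γ(a)·w for all w ∈ W if and only if a lies in the subalgebra generated by W^⊥. No finite-dimensionality or complementarity assumption on W is made. -/
open CliffordAlgebra
open scoped ComplexOrder

set_option linter.unusedVariables false

namespace TwistedDualityAux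

variable {E : Type*} [AddCommGroup E] [Module ℂ E]

theorem contract_mul (Q : QuadraticForm ℂ E) (d : Module.Dual ℂ E)
    (a : CliffordAlgebra Q) :
    ∀ b : CliffordAlgebra Q, contractLeft (Q := Q) d (a * b) =
      contractLeft (Q := Q) d a * b + involute a * contractLeft (Q := Q) d b := by
  induction a using CliffordAlgebra.induction with
  | algebraMap r =>
    intro b
    simp [contractLeft_algebraMap_mul, contractLeft_algebraMap, Algebra.smul_def]
  | ι m =>
    intro b
    rw [contractLeft_ι_mul, contractLeft_ι, involute_ι, Algebra.smul_def, neg_mul,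
      sub_eq_add_neg]
  | mul x y hx hy =>
    intro b
    rw [mul_assoc, hx, hy, hx y, map_mul]
    noncomm_ring
  | add x y hx hy =>
    intro b
    simp only [add_mul, map_add, hx b, hy b]
    abel

theorem ι_mul_sub (B : LinearMap.BilinForm ℂ E) (hB : B.IsSymm) (w : E)
    (a : CliffordAlgebra (LinearMap.BilinMap.toQuadraticMap B)) :
    ι (LinearMap.BilinMap.toQuadraticMap B) w * a
        - involute a * ι (LinearMap.BilinMap.toQuadraticMap B) w
      = (2 : ℂ) • contractLeft (Q := LinearMap.BilinMap.toQuadraticMap B) (B w) a := by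
  induction a using CliffordAlgebra.induction with
  | algebraMap r =>
    rw [AlgHom.commutes, contractLeft_algebraMap, smul_zero, Algebra.commutes, sub_self]
  | ι m =>
    rw [involute_ι, neg_mul, sub_neg_eq_add, ι_mul_ι_add_swap, contractLeft_ι]
    have hpolar : QuadraticMap.polar (LinearMap.BilinMap.toQuadraticMap B) w m
        = 2 * B w m := by
      rw [LinearMap.BilinMap.polar_toQuadraticMap, ← hB.eq m w]
      ring
    rw [hpolar, map_mul, ← Algebra.smul_def]
  | mul x y hx hy =>
    have expand : ι (LinearMap.BilinMap.toQuadraticMap B) w * (x * y)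
        - involute (x * y) * ι (LinearMap.BilinMap.toQuadraticMap B) w
        = (ι (LinearMap.BilinMap.toQuadraticMap B) w * x
            - involute x * ι (LinearMap.BilinMap.toQuadraticMap B) w) * y
          + involute x * (ι (LinearMap.BilinMap.toQuadraticMap B) w * y
            - involute y * ι (LinearMap.BilinMap.toQuadraticMap B) w) := by
      rw [map_mul]
      noncomm_ring
    rw [expand, hx, hy, contract_mul, smul_add, smul_mul_assoc, mul_smul_comm]
  | add x y hx hy =>
    rw [map_add, map_add, mul_add, add_mul, smul_add, ← hx, ← hy]
    abel

theorem contract_adjoin_zero (Q : QuadraticForm ℂ E) (d : Module.Dual ℂ E) (Z : Set E)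
    (hd : ∀ z ∈ Z, d z = 0) {a : CliffordAlgebra Q}
    (ha : a ∈ Algebra.adjoin ℂ (ι Q '' Z)) :
    contractLeft (Q := Q) d a = 0 := by
  induction ha using Algebra.adjoin_induction with
  | mem x hx =>
    obtain ⟨z, hz, rfl⟩ := hx
    rw [contractLeft_ι, hd z hz, map_zero]
  | algebraMap r => exact contractLeft_algebraMap Q d r
  | add x y hx hy ihx ihy => rw [map_add, ihx, ihy, add_zero]
  | mul x y hx hy ihx ihy => rw [contract_mul, ihx, ihy, zero_mul, mul_zero, add_zero]

theorem adjoin_mono' (Q : QuadraticForm ℂ E) {S T : Submodule ℂ E} (h : S ≤ T) :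
    Algebra.adjoin ℂ (ι Q '' (S : Set E)) ≤ Algebra.adjoin ℂ (ι Q '' (T : Set E)) :=
  Algebra.adjoin_mono (Set.image_mono h)

theorem exists_support (Q : QuadraticForm ℂ E) (a : CliffordAlgebra Q) :
    ∃ S : Submodule ℂ E, FiniteDimensional ℂ S ∧
      a ∈ Algebra.adjoin ℂ (ι Q '' (S : Set E)) := by
  induction a using CliffordAlgebra.induction with
  | algebraMap r => exact ⟨⊥, inferInstance, Subalgebra.algebraMap_mem _ r⟩
  | ι x =>
    exact ⟨ℂ ∙ x, inferInstance,
      Algebra.subset_adjoin ⟨x, Submodule.mem_span_singleton_self x, rfl⟩⟩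
  | mul x y hx hy =>
    obtain ⟨S₁, h₁, m₁⟩ := hx
    obtain ⟨S₂, h₂, m₂⟩ := hy
    exact ⟨S₁ ⊔ S₂, inferInstance,
      mul_mem (adjoin_mono' Q le_sup_left m₁) (adjoin_mono' Q le_sup_right m₂)⟩
  | add x y hx hy =>
    obtain ⟨S₁, h₁, m₁⟩ := hx
    obtain ⟨S₂, h₂, m₂⟩ := hy
    exact ⟨S₁ ⊔ S₂, inferInstance,
      add_mem (adjoin_mono' Q le_sup_left m₁) (adjoin_mono' Q le_sup_right m₂)⟩

theorem elim (Q : QuadraticForm ℂ E) (d : Module.Dual ℂ E) (S : Submodule ℂ E)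
    {s : E} (hsS : s ∈ S) (hds : d s = 1) {a : CliffordAlgebra Q}
    (ha : a ∈ Algebra.adjoin ℂ (ι Q '' (S : Set E))) :
    a - ι Q s * contractLeft (Q := Q) d a
        ∈ Algebra.adjoin ℂ (ι Q '' ((S ⊓ LinearMap.ker d : Submodule ℂ E) : Set E)) ∧
      contractLeft (Q := Q) d a
        ∈ Algebra.adjoin ℂ (ι Q '' ((S ⊓ LinearMap.ker d : Submodule ℂ E) : Set E)) := by
  have ha' : a ∈ Submodule.span ℂ ((Submonoid.closure (ι Q '' (S : Set E)) : Submonoid _)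
      : Set (CliffordAlgebra Q)) := by
    rw [← Algebra.adjoin_eq_span]
    exact ha
  clear ha
  induction ha' using Submodule.span_induction with
  | mem b hb =>
    induction hb using Submonoid.closure_induction_left with
    | one =>
      constructor
      · rw [contractLeft_one, mul_zero, sub_zero]
        exact one_mem _
      · rw [contractLeft_one]
        exact zero_mem _
    | mul_left x hx y hy ih =>
      obtain ⟨x₀, hx₀, rfl⟩ := hx
      obtain ⟨ihm, ihc⟩ := ih
      have hpx : x₀ - d x₀ • s ∈ S ⊓ LinearMap.ker d := by
        refine ⟨sub_mem hx₀ (Submodule.smul_mem _ _ hsS), ?_⟩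
        simp [LinearMap.mem_ker, hds]
      have hιpx : ι Q (x₀ - d x₀ • s)
          ∈ Algebra.adjoin ℂ (ι Q '' ((S ⊓ LinearMap.ker d : Submodule ℂ E) : Set E)) :=
        Algebra.subset_adjoin ⟨_, hpx, rfl⟩
      have e1 : contractLeft (Q := Q) d (ι Q x₀ * y)
          = d x₀ • (y - ι Q s * contractLeft (Q := Q) d y)
            - ι Q (x₀ - d x₀ • s) * contractLeft (Q := Q) d y := by
        rw [contractLeft_ι_mul, map_sub, map_smul, sub_mul, smul_mul_assoc, smul_sub]
        abel
      have e2 : ι Q x₀ * y - ι Q s * contractLeft (Q := Q) d (ι Q x₀ * y)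
          = ι Q (x₀ - d x₀ • s) * (y - ι Q s * contractLeft (Q := Q) d y)
            + (d x₀ * Q s) • contractLeft (Q := Q) d y
            + QuadraticMap.polar Q (x₀ - d x₀ • s) s • contractLeft (Q := Q) d y := by
        have hswap : ι Q s * ι Q (x₀ - d x₀ • s)
            = algebraMap ℂ _ (QuadraticMap.polar Q (x₀ - d x₀ • s) s)
              - ι Q (x₀ - d x₀ • s) * ι Q s :=
          eq_sub_of_add_eq' (ι_mul_ι_add_swap _ _)
        have hvv : ι Q s * ι Q s = algebraMap ℂ _ (Q s) := ι_sq_scalar Q s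
        have hx0 : ι Q x₀ = ι Q (x₀ - d x₀ • s) + d x₀ • ι Q s := by
          rw [map_sub, map_smul, sub_add_cancel]
        have hswap2 : ∀ c : CliffordAlgebra Q, ι Q s * (ι Q (x₀ - d x₀ • s) * c)
            = QuadraticMap.polar Q (x₀ - d x₀ • s) s • c
              - ι Q (x₀ - d x₀ • s) * (ι Q s * c) := by
          intro c
          rw [← mul_assoc, hswap, sub_mul, ← Algebra.smul_def, mul_assoc]
        have hvv2 : ∀ c : CliffordAlgebra Q, ι Q s * (ι Q s * c) = Q s • c := by
          intro c
          rw [← mul_assoc, hvv, ← Algebra.smul_def]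
        rw [contractLeft_ι_mul, hx0]
        simp only [add_mul, mul_add, mul_sub, sub_mul, smul_mul_assoc, mul_smul_comm,
          mul_assoc, smul_sub, smul_smul]
        rw [hswap2, hvv2]
        module
      constructor
      · rw [e2]
        exact add_mem (add_mem (mul_mem hιpx ihm) (Subalgebra.smul_mem _ ihc _))
          (Subalgebra.smul_mem _ ihc _)
      · rw [e1]
        exact sub_mem (Subalgebra.smul_mem _ ihm _) (mul_mem hιpx ihc)
  | zero =>
    constructor
    · rw [map_zero, mul_zero, sub_zero]; exact zero_mem _
    · rw [map_zero]; exact zero_mem _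
  | add x y hx hy ihx ihy =>
    obtain ⟨ihm₁, ihc₁⟩ := ihx
    obtain ⟨ihm₂, ihc₂⟩ := ihy
    constructor
    · have : x + y - ι Q s * contractLeft (Q := Q) d (x + y)
          = (x - ι Q s * contractLeft (Q := Q) d x)
            + (y - ι Q s * contractLeft (Q := Q) d y) := by
        rw [map_add, mul_add]; abel
      rw [this]; exact add_mem ihm₁ ihm₂
    · rw [map_add]; exact add_mem ihc₁ ihc₂
  | smul r x hx ihx =>
    obtain ⟨ihm, ihc⟩ := ihx
    constructor
    · have : r • x - ι Q s * contractLeft (Q := Q) d (r • x)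
          = r • (x - ι Q s * contractLeft (Q := Q) d x) := by
        rw [map_smul, mul_smul_comm, smul_sub]
      rw [this]; exact Subalgebra.smul_mem _ ihm _
    · rw [map_smul]; exact Subalgebra.smul_mem _ ihc _

theorem reduce (B : LinearMap.BilinForm ℂ E) (W : Submodule ℂ E) :
    ∀ n : ℕ, ∀ S : Submodule ℂ E, FiniteDimensional ℂ S → Module.finrank ℂ S ≤ n →
      ∀ a ∈ Algebra.adjoin ℂ (ι (LinearMap.BilinMap.toQuadraticMap B) '' (S : Set E)),
        (∀ w ∈ W, contractLeft (Q := LinearMap.BilinMap.toQuadraticMap B) (B w) a = 0) →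
        a ∈ Algebra.adjoin ℂ (ι (LinearMap.BilinMap.toQuadraticMap B) ''
          ((W.orthogonalBilin B : Submodule ℂ E) : Set E)) := by
  intro n
  induction n with
  | zero =>
    intro S hfd hrank a ha hc
    have hS : S = ⊥ := by
      rw [← Submodule.finrank_eq_zero (R := ℂ) (M := E)]
      omega
    subst hS
    exact adjoin_mono' _ bot_le ha
  | succ n ih =>
    intro S hfd hrank a ha hc
    by_cases hall : ∀ x ∈ S, ∀ w ∈ W, B w x = 0
    · refine adjoin_mono' _ ?_ ha
      intro x hx
      rw [Submodule.mem_orthogonalBilin_iff]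
      intro w hw
      exact hall x hx w hw
    · push_neg at hall
      obtain ⟨x, hxS, w, hwW, hBwx⟩ := hall
      set d : Module.Dual ℂ E := (B w x)⁻¹ • (B w) with hd
      have hdx : d x = 1 := by
        simp only [hd, LinearMap.smul_apply, smul_eq_mul]
        exact inv_mul_cancel₀ hBwx
      have hca : contractLeft (Q := LinearMap.BilinMap.toQuadraticMap B) d a = 0 := by
        rw [hd, map_smul, LinearMap.smul_apply, hc w hwW, smul_zero]
      have hmem := (elim (LinearMap.BilinMap.toQuadraticMap B) d S hxS hdx ha).1
      rw [hca, mul_zero, sub_zero] at hmem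
      have hlt : S ⊓ LinearMap.ker d < S := by
        refine lt_of_le_of_ne inf_le_left (fun h => ?_)
        have hx' : x ∈ S ⊓ LinearMap.ker d := by rw [h]; exact hxS
        have : d x = 0 := hx'.2
        rw [hdx] at this
        exact one_ne_zero this
      have hfd' : FiniteDimensional ℂ (S ⊓ LinearMap.ker d : Submodule ℂ E) :=
        Submodule.finiteDimensional_of_le inf_le_left
      have hrank' : Module.finrank ℂ (S ⊓ LinearMap.ker d : Submodule ℂ E) ≤ n := by
        have := Submodule.finrank_lt_finrank_of_lt (hst := hlt)
        omega
      exact ih (S ⊓ LinearMap.ker d) hfd' hrank' a hmem hc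

end TwistedDualityAux

/-- abstract twisted duality: for any subspace `W` of `V_ℂ` (modelled as a
complex vector space `E` with the extended symmetric bilinear form `B`, admitting a
conjugation `conj` with `(z̄|z) > 0` for `z ≠ 0`), the supercommutant of `C(W)` in
`C(V_ℂ)` equals `C(W^⊥)`: an element `a` satisfies `w·a = γ(a)·w` for all `w ∈ W` iff
`a` lies in the subalgebra generated by `W^⊥`.  No finite-dimensionality or
complementarity assumption on `W` is made. -/
theorem twisted_duality
    {E : Type*} [AddCommGroup E] [Module ℂ E]
    (B : LinearMap.BilinForm ℂ E) (hB : B.IsSymm)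
    (conj : E → E) (hpos : ∀ z : E, z ≠ 0 → 0 < B (conj z) z)
    (W : Submodule ℂ E) :
    {a : CliffordAlgebra (LinearMap.BilinMap.toQuadraticMap B) |
        ∀ w ∈ W, ι (LinearMap.BilinMap.toQuadraticMap B) w * a
          = involute a * ι (LinearMap.BilinMap.toQuadraticMap B) w}
      = (Algebra.adjoin ℂ (ι (LinearMap.BilinMap.toQuadraticMap B) ''
          ((W.orthogonalBilin B) : Set E)) :
            Set (CliffordAlgebra (LinearMap.BilinMap.toQuadraticMap B))) := by
  ext a
  simp only [Set.mem_setOf_eq, SetLike.mem_coe]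
  constructor
  · intro h
    have hc : ∀ w ∈ W,
        contractLeft (Q := LinearMap.BilinMap.toQuadraticMap B) (B w) a = 0 := by
      intro w hw
      have h2 := TwistedDualityAux.ι_mul_sub B hB w a
      rw [h w hw, sub_self] at h2
      have h3 := h2.symm
      rcases smul_eq_zero.mp h3 with h4 | h4
      · exact absurd h4 two_ne_zero
      · exact h4
    obtain ⟨S, hfd, haS⟩ :=
      TwistedDualityAux.exists_support (LinearMap.BilinMap.toQuadraticMap B) a
    exact TwistedDualityAux.reduce B W (Module.finrank ℂ S) S hfd le_rfl a haS hc
  · intro h w hw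
    have hz : contractLeft (Q := LinearMap.BilinMap.toQuadraticMap B) (B w) a = 0 := by
      refine TwistedDualityAux.contract_adjoin_zero _ _ _ ?_ h
      intro z hz
      exact Submodule.mem_orthogonalBilin_iff.mp hz w hw
    have h2 := TwistedDualityAux.ι_mul_sub B hB w a
    rw [hz, smul_zero] at h2
    exact sub_eq_zero.mp h2
end
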